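/- arXiv:2404.11433 — 4 statements merged into one kernel-verified Lean document; each statement's English description precedes it below -/
import Mathlib

section
/- Let m ≥ 1, F ≥ 1 be real, and let v, w ∈ [0,1]^m ⊆ ℝ^m be nonzero vectors. Suppose there exist indices i ≠ j such that w_i = v_i + ℓ₁ and w_j = v_j − ℓ₂ with ℓ₁ ≥ 1/F and ℓ₂ ≥ 1/F. Let φ be the angle between v and w. Then sin(φ) ≥ 1/(√m · F). -/
/-!
The distance from `v` to the line `ℝ w` is `sin φ · ‖v‖`, and it bounds every `‖v - t • w‖` from
below. For `t ≤ 1` coordinate `j` of `v - t • w` is at least `ℓ₂`, and for `t ≥ 1` coordinate `i`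
is at most `-ℓ₁`, because `w` is nonnegative there. Hence `sin φ · ‖v‖ ≥ 1 / F`, and
`‖v‖ ≤ √m` since all coordinates of `v` lie in `[0, 1]`.
-/

open InnerProductGeometry RealInnerProductSpace

section InnerProductSpace

variable {V : Type*} [NormedAddCommGroup V] [InnerProductSpace ℝ V]

theorem sin_angle_mul_norm_eq_norm_sub_smul (v : V) {w : V} (hw : w ≠ 0) :
    Real.sin (angle v w) * ‖v‖ = ‖v - (⟪v, w⟫ / ‖w‖ ^ 2) • w‖ := by
  have hw' : 0 < ‖w‖ := norm_pos_iff.mpr hw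
  set t := ⟪v, w⟫ / ‖w‖ ^ 2 with ht
  have hgram : ‖v‖ ^ 2 * ‖w‖ ^ 2 - ⟪v, w⟫ * ⟪v, w⟫ = (‖v - t • w‖ * ‖w‖) ^ 2 := by
    rw [mul_pow, norm_sub_sq_real, real_inner_smul_right, norm_smul, Real.norm_eq_abs, mul_pow,
      sq_abs, ht]
    field_simp
    ring
  have hsin := sin_angle_mul_norm_mul_norm v w
  rw [real_inner_self_eq_norm_sq, real_inner_self_eq_norm_sq, hgram,
    Real.sqrt_sq (by positivity), ← mul_assoc] at hsin
  exact mul_right_cancel₀ hw'.ne' hsin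

theorem le_sin_angle_mul_norm {v w : V} {c : ℝ} (h : ∀ t : ℝ, c ≤ ‖v - t • w‖) :
    c ≤ Real.sin (angle v w) * ‖v‖ := by
  rcases eq_or_ne w 0 with rfl | hw
  · simpa using h 0
  · exact (sin_angle_mul_norm_eq_norm_sub_smul v hw).symm ▸ h _

end InnerProductSpace

section EuclideanSpace

variable {ι : Type*} [Fintype ι]

theorem min_le_norm_sub_smul {v w : EuclideanSpace ℝ ι} {i j : ι} {ℓ₁ ℓ₂ : ℝ}
    (hwi : 0 ≤ w i) (hwj : 0 ≤ w j) (hi : w i = v i + ℓ₁) (hj : w j = v j - ℓ₂) (t : ℝ) :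
    min ℓ₁ ℓ₂ ≤ ‖v - t • w‖ := by
  rcases le_total t 1 with ht | ht
  · calc min ℓ₁ ℓ₂ ≤ ℓ₂ := min_le_right _ _
      _ ≤ v j - t * w j := by nlinarith
      _ ≤ ‖(v - t • w) j‖ := by
        rw [Real.norm_eq_abs, PiLp.sub_apply, PiLp.smul_apply, smul_eq_mul]
        exact le_abs_self _
      _ ≤ ‖v - t • w‖ := PiLp.norm_apply_le _ _
  · calc min ℓ₁ ℓ₂ ≤ ℓ₁ := min_le_left _ _
      _ ≤ -(v i - t * w i) := by nlinarith
      _ ≤ ‖(v - t • w) i‖ := by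
        rw [Real.norm_eq_abs, PiLp.sub_apply, PiLp.smul_apply, smul_eq_mul]
        exact neg_le_abs _
      _ ≤ ‖v - t • w‖ := PiLp.norm_apply_le _ _

theorem norm_le_sqrt_card_of_forall_abs_le_one {x : EuclideanSpace ℝ ι} (hx : ∀ k, |x k| ≤ 1) :
    ‖x‖ ≤ √(Fintype.card ι) := by
  rw [EuclideanSpace.norm_eq]
  gcongr
  calc ∑ k, ‖x k‖ ^ 2 ≤ ∑ _ : ι, (1 : ℝ) := by
        gcongr with k
        exact pow_le_one₀ (norm_nonneg _) (hx k)
    _ = Fintype.card ι := by simp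

end EuclideanSpace

theorem sin_angle_lower_bound_general (m : ℕ) (F : ℝ)
    (v w : EuclideanSpace ℝ (Fin m))
    (hv : ∀ k, 0 ≤ v k ∧ v k ≤ 1) (hw : ∀ k, 0 ≤ w k ∧ w k ≤ 1)
    (i j : Fin m) (ℓ₁ ℓ₂ : ℝ)
    (hℓ₁ : 1 / F ≤ ℓ₁) (hℓ₂ : 1 / F ≤ ℓ₂)
    (hi : w i = v i + ℓ₁) (hj : w j = v j - ℓ₂) :
    1 / (Real.sqrt m * F) ≤ Real.sin (InnerProductGeometry.angle v w) := by
  have hv_norm : ‖v‖ ≤ √m := by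
    simpa using norm_le_sqrt_card_of_forall_abs_le_one fun k =>
      abs_le.2 ⟨by linarith [(hv k).1], (hv k).2⟩
  have hsin : 1 / F ≤ Real.sin (angle v w) * √m :=
    calc 1 / F ≤ min ℓ₁ ℓ₂ := le_min hℓ₁ hℓ₂
      _ ≤ Real.sin (angle v w) * ‖v‖ :=
        le_sin_angle_mul_norm (min_le_norm_sub_smul (hw i).1 (hw j).1 hi hj)
      _ ≤ Real.sin (angle v w) * √m := by gcongr; exact sin_angle_nonneg v w
  rw [mul_comm, ← div_div]
  exact div_le_of_le_mul₀ (Real.sqrt_nonneg _) (sin_angle_nonneg v w) hsin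

theorem sin_angle_lower_bound (m : ℕ) (hm : 1 ≤ m) (F : ℝ) (hF : 1 ≤ F)
    (v w : EuclideanSpace ℝ (Fin m))
    (hv : ∀ k, 0 ≤ v k ∧ v k ≤ 1) (hw : ∀ k, 0 ≤ w k ∧ w k ≤ 1)
    (hv0 : v ≠ 0) (hw0 : w ≠ 0)
    (i j : Fin m) (hij : i ≠ j) (ℓ₁ ℓ₂ : ℝ)
    (hℓ₁ : 1 / F ≤ ℓ₁) (hℓ₂ : 1 / F ≤ ℓ₂)
    (hi : w i = v i + ℓ₁) (hj : w j = v j - ℓ₂) :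
    1 / (Real.sqrt m * F) ≤ Real.sin (InnerProductGeometry.angle v w) :=
  sin_angle_lower_bound_general m F v w hv hw i j ℓ₁ ℓ₂ hℓ₁ hℓ₂ hi hj
end

section
/- Let m ≥ 1 and p ≥ 1 be natural numbers, and let t ∈ (ℝ≥0)^m satisfy t₁ + ⋯ + t_m = 1. Then there exist nonnegative integers a₁,…,a_m with a₁ + ⋯ + a_m = p such that |t_i − a_i/p| ≤ 1/p for every i ∈ {1,…,m}. -/
/-! Round every `p * t i` down; since the `p * t i` sum to `p`, the deficit of the rounded values is
at most `m`, so rounding that many of them up instead gives integers with sum exactly `p`. -/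

open Finset

theorem exists_nat_sum_eq_of_le_sum_add_card {ι : Type*} [Fintype ι] (b : ι → ℕ) {n : ℕ}
    (hle : ∑ i, b i ≤ n) (hge : n ≤ ∑ i, b i + Fintype.card ι) :
    ∃ a : ι → ℕ, ∑ i, a i = n ∧ ∀ i, b i ≤ a i ∧ a i ≤ b i + 1 := by
  classical
  obtain ⟨s, -, hs⟩ := exists_subset_card_eq (s := (univ : Finset ι)) (n := n - ∑ i, b i)
    (by rw [card_univ]; omega)
  refine ⟨fun i => b i + if i ∈ s then 1 else 0, ?_, fun i => by dsimp only; split_ifs <;> omega⟩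
  rw [sum_add_distrib, sum_boole, Nat.cast_id, filter_mem_eq_inter, univ_inter, hs]
  omega

theorem exists_nat_sum_eq_abs_sub_le_one {ι : Type*} [Fintype ι] (x : ι → ℝ)
    (hx : ∀ i, 0 ≤ x i) {n : ℕ} (hsum : ∑ i, x i = n) :
    ∃ a : ι → ℕ, ∑ i, a i = n ∧ ∀ i, |x i - a i| ≤ 1 := by
  have hfloor_le : ∀ i, (⌊x i⌋₊ : ℝ) ≤ x i := fun i => Nat.floor_le (hx i)
  have hlt_floor : ∀ i, x i < ⌊x i⌋₊ + 1 := fun i => Nat.lt_floor_add_one _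
  have hle : ∑ i, ⌊x i⌋₊ ≤ n := by
    have : ∑ i, (⌊x i⌋₊ : ℝ) ≤ n := hsum ▸ sum_le_sum fun i _ => hfloor_le i
    exact_mod_cast this
  have hge : n ≤ ∑ i, ⌊x i⌋₊ + Fintype.card ι := by
    have : (n : ℝ) ≤ ∑ i, ((⌊x i⌋₊ : ℝ) + 1) :=
      hsum ▸ sum_le_sum fun i _ => (hlt_floor i).le
    rw [sum_add_distrib, sum_const, card_univ, nsmul_one] at this
    exact_mod_cast this
  obtain ⟨a, ha_sum, ha⟩ := exists_nat_sum_eq_of_le_sum_add_card _ hle hge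
  refine ⟨a, ha_sum, fun i => abs_le.2 ⟨?_, ?_⟩⟩ <;>
  · have hbetween : (⌊x i⌋₊ : ℝ) ≤ a i ∧ (a i : ℝ) ≤ ⌊x i⌋₊ + 1 := by exact_mod_cast ha i
    linarith [hbetween.1, hbetween.2, hfloor_le i, hlt_floor i]

theorem simplex_net_general (m p : ℕ) (hp : 1 ≤ p) (t : Fin m → ℝ)
    (ht0 : ∀ i, 0 ≤ t i) (ht1 : ∑ i, t i = 1) :
    ∃ a : Fin m → ℕ, (∑ i, a i = p) ∧ ∀ i, |t i - (a i : ℝ) / p| ≤ 1 / p := by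
  have hp0 : (0 : ℝ) < p := by exact_mod_cast hp
  obtain ⟨a, ha_sum, ha⟩ := exists_nat_sum_eq_abs_sub_le_one (fun i => p * t i)
    (fun i => mul_nonneg hp0.le (ht0 i)) (n := p) (by rw [← mul_sum, ht1, mul_one])
  refine ⟨a, ha_sum, fun i => ?_⟩
  calc |t i - (a i : ℝ) / p| = |p * t i - a i| / p := by
        rw [← abs_of_pos hp0, ← abs_div, abs_of_pos hp0]; congr 1; field_simp
    _ ≤ 1 / p := by gcongr; exact ha i

theorem simplex_net (m p : ℕ) (hm : 1 ≤ m) (hp : 1 ≤ p) (t : Fin m → ℝ)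
    (ht0 : ∀ i, 0 ≤ t i) (ht1 : ∑ i, t i = 1) :
    ∃ a : Fin m → ℕ, (∑ i, a i = p) ∧ ∀ i, |t i - (a i : ℝ) / p| ≤ 1 / p :=
  simplex_net_general m p hp t ht0 ht1
end

section
/- With m-LOTZ defined blockwise as above (m even, m/2 dividing n), the set of Pareto-optimal fitness vectors of m-LOTZ has cardinality exactly (2n/m + 1)^{m/2}. -/
/-- Number of leading ones of a block `b : Fin L → Bool`. -/
def leadingOnes {L : ℕ} (b : Fin L → Bool) : ℕ :=
  (Finset.univ.filter (fun i : Fin L => ∀ j : Fin L, j ≤ i → b j = true)).card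

/-- Number of trailing zeros of a block `b : Fin L → Bool`. -/
def trailingZeros {L : ℕ} (b : Fin L → Bool) : ℕ :=
  (Finset.univ.filter (fun i : Fin L => ∀ j : Fin L, i ≤ j → b j = false)).card

/-- The m-LOTZ benchmark, with `h = m/2` blocks of length `L = 2n/m`.
Objective `k` (0-based): leading ones of block `k/2` if `k` even, trailing zeros otherwise. -/
def mLOTZ (h L : ℕ) (x : Fin h → Fin L → Bool) : Fin (2 * h) → ℕ :=
  fun k =>
    if (k : ℕ) % 2 = 0 then leadingOnes (x ⟨(k : ℕ) / 2, by have := k.isLt; omega⟩)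
    else trailingZeros (x ⟨(k : ℕ) / 2, by have := k.isLt; omega⟩)

/-- `x` weakly dominates `y` with respect to the objective vector `f`. -/
def WeaklyDom {α : Type*} {m : ℕ} (f : α → Fin m → ℕ) (x y : α) : Prop :=
  ∀ k, f y k ≤ f x k

/-- `x` dominates `y`. -/
def Dom {α : Type*} {m : ℕ} (f : α → Fin m → ℕ) (x y : α) : Prop :=
  WeaklyDom f x y ∧ ∃ k, f y k < f x k

/-- `x` is Pareto-optimal. -/
def ParetoOpt {α : Type*} {m : ℕ} (f : α → Fin m → ℕ) (x : α) : Prop :=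
  ¬ ∃ y, Dom f y x

/-!
The positions counted by `leadingOnes b` and by `trailingZeros b` are disjoint, so
`leadingOnes b + trailingZeros b ≤ L` for every block. If a block falls short of `L`, replacing it
by the staircase `1^(i+1) 0^(L-i-1)`, where `i` is its number of leading ones, raises one objective
and lowers none; conversely, when every block attains `L` no objective can rise without another
falling. So the Pareto front consists exactly of the vectors `(i₁, L - i₁, …, i_h, L - i_h)` with
`i_q ≤ L`, and distinct choices of the `i_q` give distinct vectors.
-/

section Block

variable {L : ℕ}

def stair (c : ℕ) : Fin L → Bool := fun j => decide ((j : ℕ) < c)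

theorem leadingOnes_stair {c : ℕ} (hc : c ≤ L) : leadingOnes (stair (L := L) c) = c := by
  have hfilter : ∀ i : Fin L, (∀ j : Fin L, j ≤ i → stair c j = true) ↔ (i : ℕ) < c :=
    fun i => ⟨fun hi => by simpa [stair] using hi i le_rfl,
      fun hi j hj => by simpa [stair] using lt_of_le_of_lt (Fin.le_def.mp hj) hi⟩
  simp only [leadingOnes, hfilter, Fin.card_filter_val_lt, min_eq_right hc]

theorem trailingZeros_stair {c : ℕ} : trailingZeros (stair (L := L) c) = L - c := by
  have hfilter : ∀ i : Fin L, (∀ j : Fin L, i ≤ j → stair c j = false) ↔ ¬ (i : ℕ) < c :=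
    fun i => ⟨fun hi => by simpa [stair] using hi i le_rfl,
      fun hi j hj => by simpa [stair] using le_trans (not_lt.mp hi) (Fin.le_def.mp hj)⟩
  simp only [trailingZeros, hfilter]
  rw [Finset.filter_not, Finset.card_sdiff_of_subset (Finset.filter_subset _ _), Finset.card_univ,
    Fintype.card_fin, Fin.card_filter_val_lt]
  omega

theorem leadingOnes_add_trailingZeros_le (b : Fin L → Bool) :
    leadingOnes b + trailingZeros b ≤ L := by
  have hdisj : Disjoint
      (Finset.univ.filter fun i : Fin L => ∀ j : Fin L, j ≤ i → b j = true)
      (Finset.univ.filter fun i : Fin L => ∀ j : Fin L, i ≤ j → b j = false) := by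
    refine Finset.disjoint_filter.mpr fun i _ hone hzero => ?_
    simpa [hone i le_rfl] using hzero i le_rfl
  simpa [leadingOnes, trailingZeros, ← Finset.card_union_of_disjoint hdisj] using
    Finset.card_le_univ (α := Fin L) _

theorem exists_leadingOnes_lt_trailingZeros_le (b : Fin L → Bool)
    (hb : leadingOnes b + trailingZeros b < L) :
    ∃ b' : Fin L → Bool, leadingOnes b < leadingOnes b' ∧ trailingZeros b ≤ trailingZeros b' :=
  ⟨stair (leadingOnes b + 1), by rw [leadingOnes_stair (by omega)]; omega,
    by rw [trailingZeros_stair]; omega⟩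

end Block

theorem Fin.forall_fin_two_mul {h : ℕ} {P : Fin (2 * h) → Prop} :
    (∀ k, P k) ↔ ∀ q : Fin h, P ⟨2 * q, by omega⟩ ∧ P ⟨2 * q + 1, by omega⟩ := by
  refine ⟨fun hP q => ⟨hP _, hP _⟩, fun hP k => ?_⟩
  obtain ⟨heven, hodd⟩ := hP ⟨k / 2, by omega⟩
  rcases Nat.even_or_odd' k with ⟨q, hq | hq⟩
  · convert heven using 2; dsimp only; omega
  · convert hodd using 2; dsimp only; omega

section mLOTZ

variable {h L : ℕ}

@[simp]
theorem mLOTZ_apply_two_mul (x : Fin h → Fin L → Bool) (q : Fin h) :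
    mLOTZ h L x ⟨2 * q, by omega⟩ = leadingOnes (x q) := by
  simp [mLOTZ]

@[simp]
theorem mLOTZ_apply_two_mul_add_one (x : Fin h → Fin L → Bool) (q : Fin h) :
    mLOTZ h L x ⟨2 * q + 1, by omega⟩ = trailingZeros (x q) := by
  simp [mLOTZ, Nat.mul_add_div]

theorem weaklyDom_mLOTZ_iff {x y : Fin h → Fin L → Bool} :
    WeaklyDom (mLOTZ h L) x y ↔
      ∀ q, leadingOnes (y q) ≤ leadingOnes (x q) ∧ trailingZeros (y q) ≤ trailingZeros (x q) := by
  simp only [WeaklyDom, Fin.forall_fin_two_mul, mLOTZ_apply_two_mul, mLOTZ_apply_two_mul_add_one]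

theorem paretoOpt_mLOTZ_iff {x : Fin h → Fin L → Bool} :
    ParetoOpt (mLOTZ h L) x ↔ ∀ q, leadingOnes (x q) + trailingZeros (x q) = L := by
  refine ⟨fun hx q => ?_, fun hx => ?_⟩
  · by_contra hq
    obtain ⟨b, hlt, hle⟩ := exists_leadingOnes_lt_trailingZeros_le (x q)
      (lt_of_le_of_ne (leadingOnes_add_trailingZeros_le _) hq)
    classical
    refine hx ⟨Function.update x q b, weaklyDom_mLOTZ_iff.mpr fun p => ?_, ⟨2 * q, by omega⟩, ?_⟩
    · rcases eq_or_ne p q with rfl | hp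
      · simpa using ⟨hlt.le, hle⟩
      · simp [hp]
    · simpa using hlt
  · rintro ⟨y, hyx, k, hk⟩
    have hxy : WeaklyDom (mLOTZ h L) x y := weaklyDom_mLOTZ_iff.mpr fun q => by
      have := weaklyDom_mLOTZ_iff.mp hyx q
      have := leadingOnes_add_trailingZeros_le (y q)
      have := hx q
      omega
    exact (hxy k).not_gt hk

def stairs (a : Fin h → Fin (L + 1)) : Fin h → Fin L → Bool := fun q => stair (a q)

theorem leadingOnes_stairs (a : Fin h → Fin (L + 1)) (q : Fin h) :
    leadingOnes (stairs a q) = a q :=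
  leadingOnes_stair (Nat.lt_succ_iff.mp (a q).isLt)

theorem trailingZeros_stairs (a : Fin h → Fin (L + 1)) (q : Fin h) :
    trailingZeros (stairs a q) = L - a q :=
  trailingZeros_stair

theorem paretoOpt_stairs (a : Fin h → Fin (L + 1)) :
    ParetoOpt (mLOTZ h L) (stairs a) :=
  paretoOpt_mLOTZ_iff.mpr fun q => by
    rw [leadingOnes_stairs, trailingZeros_stairs]
    have := (a q).isLt
    omega

theorem mLOTZ_stairs_injective :
    Function.Injective fun a : Fin h → Fin (L + 1) => mLOTZ h L (stairs a) := by
  intro a a' haa'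
  funext q
  have := congrFun haa' ⟨2 * q, by omega⟩
  simp only [mLOTZ_apply_two_mul, leadingOnes_stairs] at this
  exact Fin.ext this

theorem range_mLOTZ_stairs :
    Set.range (fun a : Fin h → Fin (L + 1) => mLOTZ h L (stairs a)) =
      {v | ∃ x, ParetoOpt (mLOTZ h L) x ∧ mLOTZ h L x = v} := by
  refine Set.Subset.antisymm ?_ ?_
  · rintro _ ⟨a, rfl⟩
    exact ⟨stairs a, paretoOpt_stairs a, rfl⟩
  · rintro _ ⟨x, hx, rfl⟩
    have hsum := paretoOpt_mLOTZ_iff.mp hx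
    refine ⟨fun q => ⟨leadingOnes (x q), by have := hsum q; omega⟩,
      funext_iff.mpr <| Fin.forall_fin_two_mul.mpr fun q => ⟨?_, ?_⟩⟩
    · simp [leadingOnes_stairs]
    · simp only [mLOTZ_apply_two_mul_add_one, trailingZeros_stairs]
      have := hsum q
      omega

end mLOTZ

theorem mLOTZ_pareto_front_card_general (h L : ℕ) :
    Nat.card {v : Fin (2 * h) → ℕ //
      ∃ x : Fin h → Fin L → Bool, ParetoOpt (mLOTZ h L) x ∧ mLOTZ h L x = v} =
      (L + 1) ^ h := by
  rw [← Set.coe_ofPred, ← range_mLOTZ_stairs, Nat.card_range_of_injective mLOTZ_stairs_injective]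
  simp

theorem mLOTZ_pareto_front_card (h L : ℕ) (hh : 1 ≤ h) (hL : 1 ≤ L) :
    Nat.card {v : Fin (2 * h) → ℕ //
      ∃ x : Fin h → Fin L → Bool, ParetoOpt (mLOTZ h L) x ∧ mLOTZ h L x = v} =
      (L + 1) ^ h :=
  mLOTZ_pareto_front_card_general h L
end

section
/- Let m ≥ 1, F ≥ 1 real, and p ≥ 2·m^{3/2}·F a natural number. Let v, w ∈ [0,1]^m be nonzero vectors such that there exist indices i ≠ j with w_i ≥ v_i + 1/F and v_j ≥ w_j + 1/F. Then the angle between v and w is strictly larger than twice arcsin(m/p). Consequently v and w cannot both be within angle arcsin(m/p) of a common nonzero reference direction. -/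
/-! The coordinates `i` and `j` keep `v` at distance at least `1 / F` from every multiple `t • w`
(coordinate `j` when `t ≤ 1`, coordinate `i` when `t ≥ 1`), so `‖v‖ * sin ∠(v, w) ≥ 1 / F`, and
with `‖v‖ ≤ √m` this gives `sin ∠(v, w) ≥ 1 / (√m F) ≥ 2m / p`. Nonnegative coordinates make the
angle at most `π / 2`, so `2 arcsin x < arcsin (2x)` yields the first claim, and the triangle
inequality for angles the second. -/

open Real InnerProductGeometry RealInnerProductSpace

theorem two_mul_arcsin_lt_arcsin_two_mul {x : ℝ} (hx₀ : 0 < x) (hx₁ : x ≤ 1 / 2) :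
    2 * arcsin x < arcsin (2 * x) := by
  have ha₀ : 0 < arcsin x := arcsin_pos.mpr hx₀
  have ha₁ : arcsin x ≤ π / 6 := by
    rw [arcsin_le_iff_le_sin ⟨by linarith, by linarith⟩
      ⟨by linarith [pi_pos], by linarith [pi_pos]⟩, sin_pi_div_six]
    exact hx₁
  have hcos : cos (arcsin x) < 1 := by
    rw [cos_arcsin, sqrt_lt' one_pos]
    nlinarith
  rw [lt_arcsin_iff_sin_lt ⟨by linarith [pi_pos], by linarith [pi_pos]⟩ ⟨by linarith, by linarith⟩,
    sin_two_mul, sin_arcsin (by linarith) (by linarith)]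
  nlinarith

namespace InnerProductGeometry

variable {V : Type*} [NormedAddCommGroup V] [InnerProductSpace ℝ V]

theorem angle_le_pi_div_two_of_inner_nonneg {x y : V} (h : 0 ≤ ⟪x, y⟫) : angle x y ≤ π / 2 := by
  unfold angle
  rw [arccos_le_pi_div_two]
  positivity

theorem norm_mul_sin_angle_eq_norm_sub_smul (x : V) {y : V} (hy : y ≠ 0) :
    ‖x‖ * sin (angle x y) = ‖x - (⟪x, y⟫ / ‖y‖ ^ 2) • y‖ := by
  have hsq : ‖x - (⟪x, y⟫ / ‖y‖ ^ 2) • y‖ ^ 2 * ‖y‖ ^ 2 = ⟪x, x⟫ * ⟪y, y⟫ - ⟪x, y⟫ * ⟪x, y⟫ := by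
    rw [norm_sub_sq_real, real_inner_smul_right, norm_smul, real_inner_self_eq_norm_sq,
      real_inner_self_eq_norm_sq, Real.norm_eq_abs, mul_pow, sq_abs]
    field_simp
    ring
  have hl : ‖x‖ * sin (angle x y) * ‖y‖ = √(⟪x, x⟫ * ⟪y, y⟫ - ⟪x, y⟫ * ⟪x, y⟫) := by
    rw [← sin_angle_mul_norm_mul_norm]
    ring
  have hr : ‖x - (⟪x, y⟫ / ‖y‖ ^ 2) • y‖ * ‖y‖ = √(⟪x, x⟫ * ⟪y, y⟫ - ⟪x, y⟫ * ⟪x, y⟫) := by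
    rw [← hsq, ← mul_pow, sqrt_sq (by positivity)]
  exact mul_right_cancel₀ (norm_ne_zero_iff.mpr hy) (hl.trans hr.symm)

theorem le_norm_mul_sin_angle {x y : V} {d : ℝ} (h : ∀ t : ℝ, d ≤ ‖x - t • y‖) :
    d ≤ ‖x‖ * sin (angle x y) := by
  rcases eq_or_ne y 0 with rfl | hy
  · simpa using h 0
  · exact (norm_mul_sin_angle_eq_norm_sub_smul x hy).symm ▸ h _

end InnerProductGeometry

theorem PiLp.le_norm_sub_smul_of_incomparable {ι : Type*} [Fintype ι] {p : ENNReal} [Fact (1 ≤ p)]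
    {v w : PiLp p (fun _ : ι => ℝ)} {i j : ι} {δ : ℝ}
    (hwi : 0 ≤ w i) (hwj : 0 ≤ w j) (hi : v i + δ ≤ w i) (hj : w j + δ ≤ v j) (t : ℝ) :
    δ ≤ ‖v - t • w‖ := by
  rcases le_total t 1 with ht | ht
  · calc δ ≤ v j - t * w j := by nlinarith
      _ ≤ ‖(v - t • w) j‖ := by
        rw [PiLp.sub_apply, PiLp.smul_apply, smul_eq_mul, Real.norm_eq_abs]
        exact le_abs_self _
      _ ≤ ‖v - t • w‖ := PiLp.norm_apply_le _ j
  · calc δ ≤ -(v i - t * w i) := by nlinarith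
      _ ≤ ‖(v - t • w) i‖ := by
        rw [PiLp.sub_apply, PiLp.smul_apply, smul_eq_mul, Real.norm_eq_abs]
        exact neg_le_abs _
      _ ≤ ‖v - t • w‖ := PiLp.norm_apply_le _ i

namespace EuclideanSpace

variable {ι : Type*} [Fintype ι]

theorem norm_le_sqrt_card {𝕜 : Type*} [RCLike 𝕜] {x : EuclideanSpace 𝕜 ι} (h : ∀ i, ‖x i‖ ≤ 1) :
    ‖x‖ ≤ √(Fintype.card ι) := by
  rw [EuclideanSpace.norm_eq]
  gcongr
  calc ∑ i, ‖x i‖ ^ 2 ≤ ∑ _i : ι, (1 : ℝ) := by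
        gcongr with i
        exact pow_le_one₀ (norm_nonneg _) (h i)
    _ = Fintype.card ι := by simp

theorem inner_nonneg_of_nonneg {x y : EuclideanSpace ℝ ι} (hx : ∀ i, 0 ≤ x i) (hy : ∀ i, 0 ≤ y i) :
    0 ≤ ⟪x, y⟫ := by
  rw [PiLp.inner_apply]
  exact Finset.sum_nonneg fun i _ => by simpa using mul_nonneg (hy i) (hx i)

end EuclideanSpace

theorem angle_separation_general (m : ℕ) (hm : 1 ≤ m) (F : ℝ) (hF : 1 ≤ F) (p : ℕ)
    (hp : 2 * m * Real.sqrt m * F ≤ (p : ℝ))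
    (v w : EuclideanSpace ℝ (Fin m))
    (hv : ∀ k, 0 ≤ v k ∧ v k ≤ 1) (hw : ∀ k, 0 ≤ w k ∧ w k ≤ 1)
    (i j : Fin m)
    (hi : v i + 1 / F ≤ w i) (hj : w j + 1 / F ≤ v j) :
    2 * Real.arcsin ((m : ℝ) / p) < InnerProductGeometry.angle v w ∧
    ∀ r : EuclideanSpace ℝ (Fin m), r ≠ 0 →
      ¬ (InnerProductGeometry.angle v r ≤ Real.arcsin ((m : ℝ) / p) ∧
         InnerProductGeometry.angle w r ≤ Real.arcsin ((m : ℝ) / p)) := by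
  set θ := angle v w
  have hm' : (1 : ℝ) ≤ m := by exact_mod_cast hm
  have hsqrt : 1 ≤ √(m : ℝ) := one_le_sqrt.mpr hm'
  have hp₀ : (0 : ℝ) < p :=
    calc (0 : ℝ) < 2 * 1 * 1 * 1 := by norm_num
      _ ≤ 2 * m * √(m : ℝ) * F := by gcongr
      _ ≤ p := hp
  have hsin : 1 / F ≤ √(m : ℝ) * sin θ := by
    calc 1 / F ≤ ‖v‖ * sin θ :=
          le_norm_mul_sin_angle (PiLp.le_norm_sub_smul_of_incomparable (hw i).1 (hw j).1 hi hj)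
      _ ≤ √(m : ℝ) * sin θ := by
          gcongr
          · exact sin_angle_nonneg v w
          · simpa using EuclideanSpace.norm_le_sqrt_card (x := v) fun k => by
              rw [Real.norm_eq_abs, abs_of_nonneg (hv k).1]
              exact (hv k).2
  have hθ : θ ≤ π / 2 :=
    angle_le_pi_div_two_of_inner_nonneg
      (EuclideanSpace.inner_nonneg_of_nonneg (fun k => (hv k).1) (fun k => (hw k).1))
  have htwice : 2 * ((m : ℝ) / p) ≤ sin θ := by
    rw [div_le_iff₀ (by positivity)] at hsin
    rw [mul_div_assoc', div_le_iff₀ hp₀]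
    nlinarith [mul_le_mul_of_nonneg_left hp (sin_angle_nonneg v w),
      mul_le_mul_of_nonneg_left hsin (by positivity : (0 : ℝ) ≤ 2 * m)]
  have hbound : 2 * arcsin ((m : ℝ) / p) < θ :=
    calc 2 * arcsin ((m : ℝ) / p) < arcsin (2 * ((m : ℝ) / p)) :=
          two_mul_arcsin_lt_arcsin_two_mul (by positivity) (by linarith [sin_le_one θ])
      _ ≤ arcsin (sin θ) := monotone_arcsin htwice
      _ = θ := arcsin_sin (by linarith [pi_pos, angle_nonneg v w]) hθ
  refine ⟨hbound, fun r _ ⟨hvr, hwr⟩ => ?_⟩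
  have htri := angle_le_angle_add_angle v r w
  rw [angle_comm r w] at htri
  linarith

theorem angle_separation (m : ℕ) (hm : 1 ≤ m) (F : ℝ) (hF : 1 ≤ F) (p : ℕ)
    (hp : 2 * m * Real.sqrt m * F ≤ (p : ℝ))
    (v w : EuclideanSpace ℝ (Fin m))
    (hv : ∀ k, 0 ≤ v k ∧ v k ≤ 1) (hw : ∀ k, 0 ≤ w k ∧ w k ≤ 1)
    (hv0 : v ≠ 0) (hw0 : w ≠ 0)
    (i j : Fin m) (hij : i ≠ j)
    (hi : v i + 1 / F ≤ w i) (hj : w j + 1 / F ≤ v j) :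
    2 * Real.arcsin ((m : ℝ) / p) < InnerProductGeometry.angle v w ∧
    ∀ r : EuclideanSpace ℝ (Fin m), r ≠ 0 →
      ¬ (InnerProductGeometry.angle v r ≤ Real.arcsin ((m : ℝ) / p) ∧
         InnerProductGeometry.angle w r ≤ Real.arcsin ((m : ℝ) / p)) :=
  angle_separation_general m hm F hF p hp v w hv hw i j hi hj
end
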